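/- Fix c > 0. The function δ_c(x) = B_c(x) - R_c(x), with B_c(x) = Γ(x)Γ(c-x)/Γ(c) and R_c(x) = -ψ(x) - ψ(c-x) - 2γ, is strictly positive on (0,c); in particular B(x, c-x) > R(x, c-x) for all x ∈ (0,c). -/

import Mathlib

/-!
Gauss's integral `ψ(x) + γ = ∫₀¹ (1 - t^(x-1)) / (1 - t) dt` comes from integrating the series
`ψ(x) + γ = ∑ₖ (1/(1+k) - 1/(x+k))` term by term; the series itself follows from the recurrence
`ψ(x+1) = ψ(x) + 1/x` and `ψ(x+n) - ψ(n) → 0`, a consequence of the monotonicity of `ψ`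
(log-convexity of `Γ`). With the Beta integral, `B(x,y) - R(x,y) = B(x,y) + (ψ(x)+γ) + (ψ(y)+γ)`
becomes `∫₀¹` of `t^(x-1)(1-t)^(y-1) + (1 - t^(x-1))/(1-t) + (1 - (1-t)^(y-1))/t`, and this
integrand factors as `(t⁻¹ - t^(x-1)) ((1-t)⁻¹ - (1-t)^(y-1))`, a product of two positive factors
on `(0,1)`.
-/

noncomputable def digamma (x : ℝ) : ℝ := deriv (fun y : ℝ => Real.log (Real.Gamma y)) x

noncomputable def Bc (c x : ℝ) : ℝ := Real.Gamma x * Real.Gamma (c - x) / Real.Gamma c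

noncomputable def Rc (c x : ℝ) : ℝ :=
  -digamma x - digamma (c - x) - 2 * Real.eulerMascheroniConstant

open Real Set Filter Topology MeasureTheory intervalIntegral
open scoped Interval

lemma differentiableAt_log_Gamma {x : ℝ} (hx : 0 < x) :
    DifferentiableAt ℝ (fun y ↦ log (Gamma y)) x :=
  (differentiableAt_Gamma fun m ↦ by linarith [(m.cast_nonneg : (0 : ℝ) ≤ m)]).log
    (Gamma_pos_of_pos hx).ne'

lemma digamma_add_one {x : ℝ} (hx : 0 < x) : digamma (x + 1) = digamma x + x⁻¹ := by
  unfold digamma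
  rw [← deriv_comp_add_const, ← deriv_log,
    ← deriv_fun_add (differentiableAt_log_Gamma hx) (differentiableAt_log hx.ne')]
  refine EventuallyEq.deriv_eq ?_
  filter_upwards [eventually_gt_nhds hx] with y hy
  rw [Gamma_add_one hy.ne', log_mul hy.ne' (Gamma_pos_of_pos hy).ne', add_comm]

lemma digamma_add_nat {x : ℝ} (hx : 0 < x) (n : ℕ) :
    digamma (x + n) = digamma x + ∑ k ∈ Finset.range n, (x + k)⁻¹ := by
  induction n with
  | zero => simp
  | succ n ih =>
    rw [Nat.cast_succ, ← add_assoc, digamma_add_one (by positivity), ih, Finset.sum_range_succ,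
      add_assoc]

lemma digamma_one : digamma 1 = -eulerMascheroniConstant := by
  unfold digamma
  simpa using (hasDerivAt_Gamma_one.log (by simp)).deriv

lemma digamma_monotoneOn : MonotoneOn digamma (Ioi 0) :=
  convexOn_log_Gamma.monotoneOn_deriv fun _ hx ↦ differentiableAt_log_Gamma hx

lemma tendsto_digamma_add_nat_sub_digamma_nat {x : ℝ} (hx : 0 ≤ x) :
    Tendsto (fun n : ℕ ↦ digamma (x + n) - digamma n) atTop (𝓝 0) := by
  set m := ⌈x⌉₊
  have hbound : ∀ n : ℕ, 0 < n → digamma (x + n) - digamma n ∈ Icc 0 ((m : ℝ) / n) := by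
    intro n hn
    have hn' : (0 : ℝ) < n := by exact_mod_cast hn
    have hsum : ∑ k ∈ Finset.range m, ((n : ℝ) + k)⁻¹ ≤ m / n := by
      simpa [div_eq_mul_inv] using Finset.sum_le_card_nsmul (Finset.range m)
        (fun k : ℕ ↦ ((n : ℝ) + k)⁻¹) _ fun k _ ↦
          inv_anti₀ hn' (le_add_of_nonneg_right k.cast_nonneg)
    have hle := digamma_monotoneOn (a := x + n) (b := n + m) (by simp; positivity)
      (by simp; positivity) (by rw [add_comm]; gcongr; exact Nat.le_ceil x)
    rw [digamma_add_nat hn' m] at hle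
    exact ⟨sub_nonneg.2 (digamma_monotoneOn hn' (by simp; positivity) (by simpa)), by linarith⟩
  refine tendsto_of_tendsto_of_tendsto_of_le_of_le' tendsto_const_nhds
    (tendsto_const_div_atTop_nhds_zero_nat (m : ℝ)) ?_ ?_
  all_goals filter_upwards [eventually_gt_atTop 0] with n hn
  exacts [(hbound n hn).1, (hbound n hn).2]

lemma tendsto_sum_range_inv_sub_inv {x : ℝ} (hx : 0 < x) :
    Tendsto (fun n ↦ ∑ k ∈ Finset.range n, ((1 + k : ℝ)⁻¹ - (x + k)⁻¹)) atTop
      (𝓝 (digamma x + eulerMascheroniConstant)) := by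
  have hsum : ∀ n : ℕ, ∑ k ∈ Finset.range n, ((1 + k : ℝ)⁻¹ - (x + k)⁻¹) =
      digamma x + eulerMascheroniConstant -
        ((digamma (x + n) - digamma n) - (digamma (1 + n) - digamma n)) := by
    intro n
    rw [Finset.sum_sub_distrib, digamma_add_nat one_pos, digamma_add_nat hx, digamma_one]
    ring
  simp_rw [hsum]
  simpa using tendsto_const_nhds.sub ((tendsto_digamma_add_nat_sub_digamma_nat hx.le).sub
    (tendsto_digamma_add_nat_sub_digamma_nat zero_le_one))

lemma intervalIntegrable_one_sub_rpow_div_one_sub {a : ℝ} (ha : -1 < a) :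
    IntervalIntegrable (fun t ↦ (1 - t ^ a) / (1 - t)) volume 0 1 := by
  refine IntervalIntegrable.trans (b := 1 / 2) ?_ ?_
  · have hinv : ContinuousOn (fun t : ℝ ↦ (1 - t)⁻¹) (uIcc 0 (1 / 2)) :=
      ContinuousOn.inv₀ (by fun_prop) fun t ht ↦ by
        rw [uIcc_of_le (by norm_num)] at ht; exact (sub_pos.2 (by linarith [ht.2])).ne'
    simpa [div_eq_mul_inv] using
      (intervalIntegrable_const.sub (intervalIntegrable_rpow' ha)).mul_continuousOn hinv
  · -- near `t = 1` the integrand is the difference quotient of `t ↦ t ^ a` at `1`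
    have hcont : ContinuousOn (dslope (fun t : ℝ ↦ t ^ a) 1) (Ioi 0) :=
      (continuousOn_dslope (Ioi_mem_nhds one_pos)).2
        ⟨fun t ht ↦ (continuousAt_rpow_const _ _ (Or.inl (ne_of_gt ht))).continuousWithinAt,
          differentiableAt_rpow_const_of_ne a one_ne_zero⟩
    refine (hcont.mono fun t ht ↦ ?_).intervalIntegrable.congr_uIoo fun t ht ↦ ?_
    · rw [uIcc_of_le (by norm_num)] at ht
      exact lt_of_lt_of_le (by norm_num) ht.1
    · rw [uIoo_of_le (by norm_num)] at ht
      rw [dslope_of_ne _ ht.2.ne, slope_def_field, one_rpow, ← neg_sub 1 (t ^ a), ← neg_sub 1 t,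
        neg_div_neg_eq]

lemma hasSum_inv_sub_inv_integral {x : ℝ} (hx : 0 < x) :
    HasSum (fun k : ℕ ↦ (1 + k : ℝ)⁻¹ - (x + k)⁻¹)
      (∫ t in (0 : ℝ)..1, (1 - t ^ (x - 1)) / (1 - t)) := by
  have hterm : ∀ k : ℕ, ∫ t in (0 : ℝ)..1, t ^ k * (1 - t ^ (x - 1)) =
      (1 + k : ℝ)⁻¹ - (x + k)⁻¹ := by
    intro k
    have hrpow : ∀ t ∈ Ι (0 : ℝ) 1, t ^ k * (1 - t ^ (x - 1)) = t ^ k - t ^ (x - 1 + k) := by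
      intro t ht
      rw [uIoc_of_le zero_le_one] at ht
      rw [rpow_add ht.1, rpow_natCast]
      ring
    rw [integral_congr_ae (Eventually.of_forall hrpow),
      integral_sub (intervalIntegrable_pow k)
        (intervalIntegrable_rpow' (by linarith [k.cast_nonneg (α := ℝ)])),
      integral_pow, integral_rpow (Or.inl (by linarith [k.cast_nonneg (α := ℝ)])),
      zero_rpow (by linarith [k.cast_nonneg (α := ℝ)])]
    simp only [one_pow, one_rpow, zero_pow k.succ_ne_zero]
    rw [show x - 1 + k + 1 = x + k by ring]
    ring
  have hne1 : ∀ᵐ t ∂volume, t ≠ (1 : ℝ) := compl_mem_ae_iff.2 (measure_singleton 1)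
  have hgeom : ∀ t ∈ Ι (0 : ℝ) 1, t ≠ 1 → ∀ c : ℝ,
      HasSum (fun k : ℕ ↦ t ^ k * c) ((1 - t)⁻¹ * c) := by
    intro t ht ht1 c
    rw [uIoc_of_le zero_le_one] at ht
    exact (hasSum_geometric_of_lt_one ht.1.le (lt_of_le_of_ne ht.2 ht1)).mul_right c
  simp_rw [← hterm]
  refine hasSum_integral_of_dominated_convergence
    (fun k t ↦ t ^ k * |1 - t ^ (x - 1)|) (fun k ↦ by fun_prop) ?_ ?_ ?_ ?_
  · refine fun k ↦ Eventually.of_forall fun t ht ↦ ?_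
    rw [uIoc_of_le zero_le_one] at ht
    rw [norm_mul, norm_pow, Real.norm_of_nonneg ht.1.le, Real.norm_eq_abs]
  · filter_upwards [hne1] with t ht1 ht using (hgeom t ht ht1 _).summable
  · refine (intervalIntegrable_one_sub_rpow_div_one_sub (a := x - 1) (by linarith)).abs.congr_ae ?_
    rw [uIoc_of_le zero_le_one]
    filter_upwards [ae_restrict_mem measurableSet_Ioc, ae_restrict_of_ae hne1] with t ht ht1
    rw [(hgeom t (by rwa [uIoc_of_le zero_le_one]) ht1 _).tsum_eq, abs_div,
      abs_of_pos (sub_pos.2 (lt_of_le_of_ne ht.2 ht1)), div_eq_inv_mul]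
  · filter_upwards [hne1] with t ht1 ht
    rw [div_eq_inv_mul]
    exact hgeom t ht ht1 _

lemma digamma_add_eulerMascheroniConstant_eq_integral {x : ℝ} (hx : 0 < x) :
    digamma x + eulerMascheroniConstant = ∫ t in (0 : ℝ)..1, (1 - t ^ (x - 1)) / (1 - t) :=
  tendsto_nhds_unique (tendsto_sum_range_inv_sub_inv hx)
    (hasSum_inv_sub_inv_integral hx).tendsto_sum_nat

lemma ofReal_rpow_mul_one_sub_rpow {a b t : ℝ} (ht : t ∈ Icc (0 : ℝ) 1) :
    ((t ^ (a - 1) * (1 - t) ^ (b - 1) : ℝ) : ℂ) =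
      (t : ℂ) ^ ((a : ℂ) - 1) * (1 - (t : ℂ)) ^ ((b : ℂ) - 1) := by
  rw [Complex.ofReal_mul, Complex.ofReal_cpow ht.1, Complex.ofReal_cpow (sub_nonneg.2 ht.2)]
  push_cast
  rfl

lemma intervalIntegrable_rpow_mul_one_sub_rpow {a b : ℝ} (ha : 0 < a) (hb : 0 < b) :
    IntervalIntegrable (fun t ↦ t ^ (a - 1) * (1 - t) ^ (b - 1)) volume 0 1 := by
  refine (Complex.betaIntegral_convergent (u := a) (v := b) (by simpa) (by simpa)).norm.congr
    fun t ht ↦ ?_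
  have ht' : t ∈ Icc (0 : ℝ) 1 := Ioc_subset_Icc_self (by rwa [uIoc_of_le zero_le_one] at ht)
  rw [← ofReal_rpow_mul_one_sub_rpow ht', Complex.norm_real, Real.norm_of_nonneg
    (mul_nonneg (rpow_nonneg ht'.1 _) (rpow_nonneg (sub_nonneg.2 ht'.2) _))]

lemma Gamma_mul_Gamma_div_Gamma_add_eq_integral {a b : ℝ} (ha : 0 < a) (hb : 0 < b) :
    Gamma a * Gamma b / Gamma (a + b) = ∫ t in (0 : ℝ)..1, t ^ (a - 1) * (1 - t) ^ (b - 1) := by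
  rw [div_eq_iff (Gamma_pos_of_pos (add_pos ha hb)).ne', ← Complex.ofReal_inj,
    Complex.ofReal_mul, Complex.ofReal_mul, ← Complex.Gamma_ofReal, ← Complex.Gamma_ofReal,
    ← Complex.Gamma_ofReal, Complex.ofReal_add,
    Complex.Gamma_mul_Gamma_eq_betaIntegral (by simpa) (by simpa), Complex.betaIntegral,
    ← intervalIntegral.integral_ofReal, mul_comm]
  congr 1
  refine intervalIntegral.integral_congr fun t ht ↦ ?_
  rw [uIcc_of_le zero_le_one] at ht
  exact (ofReal_rpow_mul_one_sub_rpow ht).symm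

lemma Gamma_mul_Gamma_div_Gamma_add_add_digamma_add_digamma_pos {a b : ℝ} (ha : 0 < a)
    (hb : 0 < b) :
    0 < Gamma a * Gamma b / Gamma (a + b) + (digamma a + eulerMascheroniConstant) +
      (digamma b + eulerMascheroniConstant) := by
  have hreflect : ∫ t in (0 : ℝ)..1, (1 - t ^ (b - 1)) / (1 - t) =
      ∫ t in (0 : ℝ)..1, (1 - (1 - t) ^ (b - 1)) / t := by
    simpa using
      (integral_comp_sub_left (a := 0) (b := 1) (fun t ↦ (1 - t ^ (b - 1)) / (1 - t)) 1).symm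
  have hint₃ : IntervalIntegrable (fun t ↦ (1 - (1 - t) ^ (b - 1)) / t) volume 0 1 := by
    have h := intervalIntegrable_one_sub_rpow_div_one_sub (a := b - 1) (by linarith)
    simpa using (h.comp_sub_left 1).symm
  have hint₁₂ := (intervalIntegrable_rpow_mul_one_sub_rpow ha hb).add
    (intervalIntegrable_one_sub_rpow_div_one_sub (a := a - 1) (by linarith))
  rw [Gamma_mul_Gamma_div_Gamma_add_eq_integral ha hb,
    digamma_add_eulerMascheroniConstant_eq_integral ha,
    digamma_add_eulerMascheroniConstant_eq_integral hb, hreflect,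
    ← integral_add (intervalIntegrable_rpow_mul_one_sub_rpow ha hb)
      (intervalIntegrable_one_sub_rpow_div_one_sub (by linarith)),
    ← integral_add hint₁₂ hint₃]
  refine intervalIntegral_pos_of_pos_on (hint₁₂.add hint₃) (fun t ⟨ht₀, ht₁⟩ ↦ ?_) zero_lt_one
  have ht₁' : 0 < 1 - t := sub_pos.2 ht₁
  have hfactor : ∀ u v : ℝ, u * v + (1 - u) / (1 - t) + (1 - v) / t =
      (t⁻¹ - u) * ((1 - t)⁻¹ - v) := by
    intro u v
    field_simp
    ring
  simp only [hfactor]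
  refine mul_pos (sub_pos.2 ?_) (sub_pos.2 ?_) <;> rw [← rpow_neg_one]
  · exact rpow_lt_rpow_of_exponent_gt ht₀ ht₁ (by linarith)
  · exact rpow_lt_rpow_of_exponent_gt ht₁' (by linarith) (by linarith)

theorem stmt_10_general (c : ℝ) :
    ∀ x ∈ Set.Ioo 0 c, 0 < Bc c x - Rc c x := by
  rintro x ⟨hx, hxc⟩
  have h := Gamma_mul_Gamma_div_Gamma_add_add_digamma_add_digamma_pos hx (sub_pos.2 hxc)
  rw [add_sub_cancel] at h
  rw [Bc, Rc]
  linarith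

theorem stmt_10 (c : ℝ) (hc : 0 < c) :
    ∀ x ∈ Set.Ioo 0 c, 0 < Bc c x - Rc c x :=
  stmt_10_general c
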